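/- arXiv:2302.02246 — 7 statements merged into one kernel-verified Lean document; each statement's English description precedes it below -/
import Mathlib

section
/- Let A be an n×n real matrix, C a q×n real matrix, and let the constraint set be Y = {y ∈ ℝ^q : -y_j^l ≤ y_j ≤ y_j^u for all j}, with y_j^l, y_j^u > 0. Suppose there exists m ≥ 0 and real coefficients α_0,...,α_m with A^{m+1} = Σ_{i=0}^m α_i A^i, satisfying Σ_{α_i>0} α_i - γ Σ_{α_i<0} α_i ≤ 1, where γ = max_j max{y_j^u/y_j^l, y_j^l/y_j^u}. Then for any initial state x_0, if C A^t x_0 ∈ Y for t = 0,...,m, it follows that C A^t x_0 ∈ Y for all t ≥ 0. -/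
lemma sumMulVecAux {n k : ℕ} {ι : Type*} (s : Finset ι)
    (M : ι → Matrix (Fin k) (Fin n) ℝ) (v : Fin n → ℝ) :
    (∑ i ∈ s, M i).mulVec v = ∑ i ∈ s, (M i).mulVec v := by
  classical
  induction s using Finset.induction with
  | empty => simp
  | insert _ _ h ih => simp [Finset.sum_insert h, Matrix.add_mulVec, ih]

/-- Power-series redundancy theorem (unforced case): if `A^{m+1} = ∑ αᵢ Aⁱ`
with `∑_{αᵢ>0} αᵢ - γ ∑_{αᵢ<0} αᵢ ≤ 1`, where `γ` is the largest constraint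
asymmetry, then admissibility of the output over `t = 0, …, m` implies
admissibility for all `t ≥ 0`. -/
theorem stmt_3 {n q : ℕ} (hq : 0 < q)
    (A : Matrix (Fin n) (Fin n) ℝ) (C : Matrix (Fin q) (Fin n) ℝ)
    (yl yu : Fin q → ℝ) (hyl : ∀ j, 0 < yl j) (hyu : ∀ j, 0 < yu j)
    (γ : ℝ)
    (hγ : γ = Finset.univ.sup' (Finset.univ_nonempty_iff.mpr ⟨⟨0, hq⟩⟩)
      (fun j : Fin q => max (yu j / yl j) (yl j / yu j)))
    (m : ℕ) (α : ℕ → ℝ)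
    (hexp : A ^ (m + 1) = ∑ i ∈ Finset.range (m + 1), α i • A ^ i)
    (hcond : (∑ i ∈ Finset.range (m + 1), max (α i) 0)
      - γ * (∑ i ∈ Finset.range (m + 1), min (α i) 0) ≤ 1) :
    ∀ x0 : Fin n → ℝ,
      (∀ t ≤ m, ∀ j, -yl j ≤ (C.mulVec ((A ^ t).mulVec x0)) j ∧
        (C.mulVec ((A ^ t).mulVec x0)) j ≤ yu j) →
      ∀ t : ℕ, ∀ j, -yl j ≤ (C.mulVec ((A ^ t).mulVec x0)) j ∧
        (C.mulVec ((A ^ t).mulVec x0)) j ≤ yu j := by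
  intro x0 hbase t
  induction t using Nat.strong_induction_on with
  | _ t ih =>
    by_cases ht : t ≤ m
    · exact hbase t ht
    · push_neg at ht
      set s := t - (m + 1) with hs
      have hts : t = m + 1 + s := by omega
      intro j
      -- express A^t via the recurrence
      have hA : A ^ t = ∑ i ∈ Finset.range (m + 1), α i • A ^ (i + s) := by
        rw [hts, pow_add, hexp, Finset.sum_mul]
        refine Finset.sum_congr rfl fun i _ => ?_
        rw [smul_mul_assoc, ← pow_add]
      have hy : C.mulVec ((A ^ t).mulVec x0) =
          ∑ i ∈ Finset.range (m + 1), α i • C.mulVec ((A ^ (i + s)).mulVec x0) := by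
        rw [hA, sumMulVecAux, ← Matrix.mulVecLin_apply, map_sum]
        refine Finset.sum_congr rfl fun i _ => ?_
        rw [Matrix.smul_mulVec, map_smul, Matrix.mulVecLin_apply]
      set z : ℕ → ℝ := fun i => C.mulVec ((A ^ (i + s)).mulVec x0) j with hz
      have hyj : C.mulVec ((A ^ t).mulVec x0) j
          = ∑ i ∈ Finset.range (m + 1), α i * z i := by
        rw [hy]
        simp [Finset.sum_apply, hz]
      have hzb : ∀ i ∈ Finset.range (m + 1), -yl j ≤ z i ∧ z i ≤ yu j := by
        intro i hi
        have : i + s < t := by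
          simp only [Finset.mem_range] at hi; omega
        exact ih (i + s) this j
      -- γ facts
      have hγj : max (yu j / yl j) (yl j / yu j) ≤ γ := by
        rw [hγ]
        exact Finset.le_sup' (fun j : Fin q => max (yu j / yl j) (yl j / yu j)) (Finset.mem_univ j)
      have h1 : yl j ≤ γ * yu j := by
        have := le_trans (le_max_right _ _) hγj
        rw [div_le_iff₀ (hyu j)] at this
        linarith
      have h2 : yu j ≤ γ * yl j := by
        have := le_trans (le_max_left _ _) hγj
        rw [div_le_iff₀ (hyl j)] at this
        linarith
      set P := ∑ i ∈ Finset.range (m + 1), max (α i) 0 with hP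
      set N := ∑ i ∈ Finset.range (m + 1), min (α i) 0 with hN
      have hPnn : 0 ≤ P := Finset.sum_nonneg fun i _ => le_max_right _ _
      have hNnp : N ≤ 0 := Finset.sum_nonpos fun i _ => min_le_right _ _
      -- upper bound
      have hub : ∑ i ∈ Finset.range (m + 1), α i * z i ≤ P * yu j - N * yl j := by
        have : ∑ i ∈ Finset.range (m + 1), α i * z i
            ≤ ∑ i ∈ Finset.range (m + 1), (max (α i) 0 * yu j - min (α i) 0 * yl j) := by
          refine Finset.sum_le_sum fun i hi => ?_
          obtain ⟨hzl, hzu⟩ := hzb i hi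
          have hmax : max (α i) 0 * z i ≤ max (α i) 0 * yu j :=
            mul_le_mul_of_nonneg_left hzu (le_max_right _ _)
          have hmin : min (α i) 0 * z i ≤ min (α i) 0 * (-yl j) :=
            mul_le_mul_of_nonpos_left hzl (min_le_right _ _)
          have heq : α i * z i = max (α i) 0 * z i + min (α i) 0 * z i := by
            rw [← add_mul, max_add_min, add_zero]
          linarith
        calc _ ≤ _ := this
          _ = P * yu j - N * yl j := by
            rw [Finset.sum_sub_distrib, ← Finset.sum_mul, ← Finset.sum_mul]
      have hlb : -(P * yl j) + N * yu j ≤ ∑ i ∈ Finset.range (m + 1), α i * z i := by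
        have : ∑ i ∈ Finset.range (m + 1), (max (α i) 0 * (-yl j) + min (α i) 0 * yu j)
            ≤ ∑ i ∈ Finset.range (m + 1), α i * z i := by
          refine Finset.sum_le_sum fun i hi => ?_
          obtain ⟨hzl, hzu⟩ := hzb i hi
          have hmax : max (α i) 0 * (-yl j) ≤ max (α i) 0 * z i :=
            mul_le_mul_of_nonneg_left hzl (le_max_right _ _)
          have hmin : min (α i) 0 * yu j ≤ min (α i) 0 * z i :=
            mul_le_mul_of_nonpos_left hzu (min_le_right _ _)
          have heq : α i * z i = max (α i) 0 * z i + min (α i) 0 * z i := by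
            rw [← add_mul, max_add_min, add_zero]
          linarith
        calc -(P * yl j) + N * yu j
            = ∑ i ∈ Finset.range (m + 1), (max (α i) 0 * (-yl j) + min (α i) 0 * yu j) := by
              rw [Finset.sum_add_distrib, ← Finset.sum_mul, ← Finset.sum_mul]; ring
          _ ≤ _ := this
      rw [hyj]
      constructor
      · -- -yl j ≤ sum
        have key : -yl j ≤ -(P * yl j) + N * yu j := by
          nlinarith [mul_le_mul_of_nonpos_left h2 hNnp, hyl j, hyu j]
        linarith
      · have key : P * yu j - N * yl j ≤ yu j := by
          nlinarith [mul_le_mul_of_nonpos_left h1 hNnp, hyl j, hyu j]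
        linarith
end

section
/- Let A ∈ ℝ^{n×n}, C ∈ ℝ^{q×n}, and suppose A^{m+1} = Σ_{i=0}^m α_i A^i with Σ_{i=0}^m |α_i| ≤ 1. Let b_j > 0, j = 1,...,q, be fixed bounds. If x_0 ∈ ℝ^n satisfies |C_j A^t x_0| ≤ b_j for all j = 1,...,q and t = 0,...,m, then |C_j A^t x_0| ≤ b_j for all j = 1,...,q and all t ≥ 0. -/
/-- Symmetric-constraint redundancy: if `A^{m+1} = ∑ αᵢ Aⁱ` with
`∑ |αᵢ| ≤ 1`, and the componentwise bounds `|C_j A^t x₀| ≤ b_j` hold for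
`t = 0, …, m`, then they hold for all `t ≥ 0`. -/
theorem stmt_4 {n q : ℕ} (A : Matrix (Fin n) (Fin n) ℝ)
    (C : Matrix (Fin q) (Fin n) ℝ)
    (b : Fin q → ℝ) (hb : ∀ j, 0 < b j)
    (m : ℕ) (α : ℕ → ℝ)
    (hexp : A ^ (m + 1) = ∑ i ∈ Finset.range (m + 1), α i • A ^ i)
    (hcond : ∑ i ∈ Finset.range (m + 1), |α i| ≤ 1)
    (x0 : Fin n → ℝ)
    (hadm : ∀ t ≤ m, ∀ j, |(C.mulVec ((A ^ t).mulVec x0)) j| ≤ b j) :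
    ∀ t : ℕ, ∀ j, |(C.mulVec ((A ^ t).mulVec x0)) j| ≤ b j := by
  intro t
  induction t using Nat.strong_induction_on with
  | _ t ih =>
    intro j
    by_cases ht : t ≤ m
    · exact hadm t ht j
    · push_neg at ht
      obtain ⟨s, rfl⟩ : ∃ s, t = s + (m + 1) := ⟨t - (m + 1), by omega⟩
      have hpow : A ^ (s + (m + 1)) =
          ∑ i ∈ Finset.range (m + 1), α i • A ^ (i + s) := by
        rw [pow_add, hexp, Finset.mul_sum]
        congr 1; ext i
        rw [mul_smul_comm, ← pow_add]
        ring_nf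
      have hval : (C.mulVec ((A ^ (s + (m + 1))).mulVec x0)) j =
          ∑ i ∈ Finset.range (m + 1),
            α i * (C.mulVec ((A ^ (i + s)).mulVec x0)) j := by
        rw [Matrix.mulVec_mulVec, hpow, Matrix.mul_sum]
        simp only [Matrix.mul_smul]
        rw [show ((∑ i ∈ Finset.range (m + 1), α i • (C * A ^ (i + s))).mulVec x0) j
            = ∑ i ∈ Finset.range (m + 1), α i * ((C * A ^ (i + s)).mulVec x0) j from ?_]
        · simp [← Matrix.mulVec_mulVec]
        · simp only [Matrix.mulVec, dotProduct, Matrix.sum_apply,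
            Matrix.smul_apply, smul_eq_mul, Finset.sum_mul, Finset.mul_sum,
            mul_assoc]
          rw [Finset.sum_comm]
      rw [hval]
      calc |∑ i ∈ Finset.range (m + 1),
              α i * (C.mulVec ((A ^ (i + s)).mulVec x0)) j|
          ≤ ∑ i ∈ Finset.range (m + 1),
              |α i * (C.mulVec ((A ^ (i + s)).mulVec x0)) j| :=
            Finset.abs_sum_le_sum_abs _ _
        _ ≤ ∑ i ∈ Finset.range (m + 1), |α i| * b j := by
            apply Finset.sum_le_sum
            intro i hi
            rw [abs_mul]
            have hi' : i < m + 1 := Finset.mem_range.mp hi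
            exact mul_le_mul_of_nonneg_left
              (ih (i + s) (by omega) j) (abs_nonneg _)
        _ = (∑ i ∈ Finset.range (m + 1), |α i|) * b j := by
            rw [Finset.sum_mul]
        _ ≤ 1 * b j := mul_le_mul_of_nonneg_right hcond (hb j).le
        _ = b j := one_mul _
end

section
/- Base case of the redundancy argument: let A ∈ ℝ^{n×n}, C_j ∈ ℝ^{1×n}, suppose A^{m+1} = Σ_{i=0}^m α_i A^i, and suppose -l ≤ C_j A^i x_0 ≤ u for i = 0,...,m, where l, u > 0. If Σ_{α_i>0} α_i - (u/l) Σ_{α_i<0} α_i ≤ 1 and Σ_{α_i>0} α_i - (l/u) Σ_{α_i<0} α_i ≤ 1, then -l ≤ C_j A^{m+1} x_0 ≤ u. -/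
open Matrix

/-- Base case of the redundancy argument for a single output row `C_j`:
the coefficient conditions imply `-l ≤ C_j A^{m+1} x₀ ≤ u`. -/
theorem stmt_5 {n : ℕ} (A : Matrix (Fin n) (Fin n) ℝ) (Cj : Fin n → ℝ)
    (l u : ℝ) (hl : 0 < l) (hu : 0 < u)
    (m : ℕ) (α : ℕ → ℝ)
    (hexp : A ^ (m + 1) = ∑ i ∈ Finset.range (m + 1), α i • A ^ i)
    (x0 : Fin n → ℝ)
    (hadm : ∀ i ≤ m, -l ≤ Cj ⬝ᵥ ((A ^ i).mulVec x0) ∧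
      Cj ⬝ᵥ ((A ^ i).mulVec x0) ≤ u)
    (hcond1 : (∑ i ∈ Finset.range (m + 1), max (α i) 0)
      - (u / l) * (∑ i ∈ Finset.range (m + 1), min (α i) 0) ≤ 1)
    (hcond2 : (∑ i ∈ Finset.range (m + 1), max (α i) 0)
      - (l / u) * (∑ i ∈ Finset.range (m + 1), min (α i) 0) ≤ 1) :
    -l ≤ Cj ⬝ᵥ ((A ^ (m + 1)).mulVec x0) ∧
      Cj ⬝ᵥ ((A ^ (m + 1)).mulVec x0) ≤ u := by
  set y : ℕ → ℝ := fun i => Cj ⬝ᵥ ((A ^ i).mulVec x0) with hy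
  have key : Cj ⬝ᵥ ((A ^ (m + 1)).mulVec x0)
      = ∑ i ∈ Finset.range (m + 1), α i * y i := by
    rw [hexp]
    have : ∀ s : Finset ℕ,
        Cj ⬝ᵥ ((∑ i ∈ s, α i • A ^ i).mulVec x0) = ∑ i ∈ s, α i * y i := by
      intro s
      induction s using Finset.cons_induction with
      | empty => simp [hy]
      | cons a s ha ih =>
        rw [Finset.sum_cons, Finset.sum_cons, Matrix.add_mulVec,
          dotProduct_add, Matrix.smul_mulVec, dotProduct_smul, ih,
          smul_eq_mul]
    exact this _
  have hupper : ∀ i ∈ Finset.range (m + 1),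
      α i * y i ≤ u * max (α i) 0 - l * min (α i) 0 := by
    intro i hi
    have hi' := hadm i (Nat.lt_succ_iff.mp (Finset.mem_range.mp hi))
    rcases le_or_gt 0 (α i) with h | h
    · rw [max_eq_left h, min_eq_right h]
      nlinarith [hi'.2]
    · rw [max_eq_right h.le, min_eq_left h.le]
      nlinarith [hi'.1]
  have hlower : ∀ i ∈ Finset.range (m + 1),
      -l * max (α i) 0 + u * min (α i) 0 ≤ α i * y i := by
    intro i hi
    have hi' := hadm i (Nat.lt_succ_iff.mp (Finset.mem_range.mp hi))
    rcases le_or_gt 0 (α i) with h | h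
    · rw [max_eq_left h, min_eq_right h]
      nlinarith [hi'.1]
    · rw [max_eq_right h.le, min_eq_left h.le]
      nlinarith [hi'.2]
  set P := ∑ i ∈ Finset.range (m + 1), max (α i) 0 with hP
  set N := ∑ i ∈ Finset.range (m + 1), min (α i) 0 with hN
  have hsum_up : Cj ⬝ᵥ ((A ^ (m + 1)).mulVec x0) ≤ u * P - l * N := by
    rw [key, hP, hN, Finset.mul_sum, Finset.mul_sum, ← Finset.sum_sub_distrib]
    exact Finset.sum_le_sum hupper
  have hsum_lo : -l * P + u * N ≤ Cj ⬝ᵥ ((A ^ (m + 1)).mulVec x0) := by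
    rw [key, hP, hN, Finset.mul_sum, Finset.mul_sum, ← Finset.sum_add_distrib]
    exact Finset.sum_le_sum hlower
  have hc1 : l * P - u * N ≤ l := by
    have := mul_le_mul_of_nonneg_left hcond1 hl.le
    rw [mul_sub, mul_one] at this
    calc l * P - u * N = l * P - l * ((u / l) * N) := by
          field_simp
        _ ≤ l := by linarith
  have hc2 : u * P - l * N ≤ u := by
    have := mul_le_mul_of_nonneg_left hcond2 hu.le
    rw [mul_sub, mul_one] at this
    calc u * P - l * N = u * P - u * ((l / u) * N) := by
          field_simp
        _ ≤ u := by linarith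
  constructor
  · linarith
  · linarith
end

section
/- Let a ∈ ℝ with |a| < 1 represent a scalar system x(t+1) = a x(t), with output y(t) = c x(t) for c ≠ 0, and box constraint -l ≤ y ≤ u with l, u > 0. Let γ = max{u/l, l/u}. If a > -1/γ, then the set {x_0 : c a^t x_0 ∈ [-l, u] for all t ≥ 0} equals {x_0 : c x_0 ∈ [-l, u]}, i.e., the admissibility index t* = 0. In particular this holds whenever the constraint is symmetric (l = u). -/
lemma stmt_6_key (a γ l u y : ℝ) (ha1 : a < 1) (hl : 0 < l) (hu : 0 < u)
    (hγl : u ≤ γ * l) (hγu : l ≤ γ * u) (hγ0 : 0 < γ)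
    (haγ : -1 < a * γ) (hy : y ∈ Set.Icc (-l) u) : a * y ∈ Set.Icc (-l) u := by
  obtain ⟨h1, h2⟩ := hy
  constructor
  · rcases le_or_gt 0 y with hy0 | hy0
    · nlinarith
    · nlinarith
  · rcases le_or_gt 0 y with hy0 | hy0
    · nlinarith
    · nlinarith

/-- First-order (scalar) case: if `a > -1/γ`, the admissibility index is `0`,
i.e. the maximal admissible set is cut out by the time-0 constraint alone.
In particular this holds for symmetric constraints (`l = u`, so `γ = 1`). -/
theorem stmt_6 (a c l u : ℝ) (ha : |a| < 1) (hc : c ≠ 0)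
    (hl : 0 < l) (hu : 0 < u)
    (γ : ℝ) (hγ : γ = max (u / l) (l / u))
    (haγ : a > -1 / γ) :
    {x0 : ℝ | ∀ t : ℕ, c * a ^ t * x0 ∈ Set.Icc (-l) u} =
      {x0 : ℝ | c * x0 ∈ Set.Icc (-l) u} := by
  have hul : u / l ≤ γ := hγ ▸ le_max_left _ _
  have hlu : l / u ≤ γ := hγ ▸ le_max_right _ _
  have hγl : u ≤ γ * l := by linarith [(div_le_iff₀ hl).mp hul]
  have hγu : l ≤ γ * u := by linarith [(div_le_iff₀ hu).mp hlu]
  have hγ0 : 0 < γ := lt_of_lt_of_le (div_pos hu hl) hul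
  have haγ' : -1 < a * γ := by
    have h2 : (-1)/γ < a := haγ
    have := (div_lt_iff₀ hγ0).mp h2
    linarith
  have ha1 : a < 1 := (abs_lt.mp ha).2
  ext x0
  simp only [Set.mem_setOf_eq]
  constructor
  · intro h
    have := h 0
    simpa using this
  · intro h t
    induction t with
    | zero => simpa using h
    | succ n ih =>
      have : c * a ^ (n + 1) * x0 = a * (c * a ^ n * x0) := by ring
      rw [this]
      exact stmt_6_key a γ l u _ ha1 hl hu hγl hγu hγ0 haγ' ih
end

section
/- Let A ∈ ℝ^{n×n} with ρ(A) < 1, and let P be the solution of A^T P A - P = -Q for Q = Q^T ⪰ I. Then P ⪰ P_I, where P_I is the solution of A^T P_I A - P_I = -I. Consequently λ_max(P) ≥ λ_max(P_I), so among all Q normalized to λ_min(Q) = 1, the choice Q = I minimizes λ_max(P) and hence minimizes σ = 1 - λ_min(Q)/λ_max(P). -/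
open Matrix Filter Topology
open scoped ENNReal NNReal

attribute [local instance] Matrix.linftyOpNormedRing Matrix.linftyOpNormedAlgebra

private lemma aux_entry_nnnorm_le {n : ℕ} (M : Matrix (Fin n) (Fin n) ℂ) (i j : Fin n) :
    ‖M i j‖₊ ≤ ‖M‖₊ := by
  rw [Matrix.linfty_opNNNorm_def]
  calc ‖M i j‖₊ ≤ ∑ k, ‖M i k‖₊ :=
        Finset.single_le_sum (f := fun k => ‖M i k‖₊) (fun _ _ => zero_le) (Finset.mem_univ j)
    _ ≤ _ := Finset.le_sup (f := fun i => ∑ k, ‖M i k‖₊) (Finset.mem_univ i)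

private lemma aux_pow_entry_tendsto {n : ℕ} (hn : 0 < n) (A : Matrix (Fin n) (Fin n) ℝ)
    (hstab : ∀ μ : ℂ, (A.charpoly.map (algebraMap ℝ ℂ)).IsRoot μ → ‖μ‖ < 1) (i j : Fin n) :
    Tendsto (fun k => (A ^ k) i j) atTop (𝓝 0) := by
  haveI : Nonempty (Fin n) := Fin.pos_iff_nonempty.mp hn
  set B := A.map (algebraMap ℝ ℂ) with hB
  have hspec : ∀ μ ∈ spectrum ℂ B, ‖μ‖₊ < 1 := by
    intro μ hμ
    have : ‖μ‖ < 1 := by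
      apply hstab
      rw [← Matrix.charpoly_map]
      have h1 : ¬ IsUnit (algebraMap ℂ (Matrix (Fin n) (Fin n) ℂ) μ - B) := hμ
      rw [Matrix.isUnit_iff_isUnit_det, isUnit_iff_ne_zero, not_not] at h1
      have h2 : B.charpoly.eval μ = (algebraMap ℂ (Matrix (Fin n) (Fin n) ℂ) μ - B).det := by
        rw [Matrix.charpoly, eval_det, Matrix.matPolyEquiv_charmatrix]
        simp [Matrix.scalar, Algebra.algebraMap_eq_smul_one, Matrix.smul_eq_diagonal_mul]
      exact h2.trans h1
    exact_mod_cast this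
  have hr : spectralRadius ℂ B < 1 := by
    simpa using spectrum.spectralRadius_lt_of_forall_lt (a := B) (r := 1) hspec
  obtain ⟨c, hc1, hc2⟩ := ENNReal.lt_iff_exists_nnreal_btwn.mp hr
  have hc2' : c < 1 := by exact_mod_cast hc2
  have ht := spectrum.pow_nnnorm_pow_one_div_tendsto_nhds_spectralRadius B
  have hev : ∀ᶠ k : ℕ in atTop, (‖B ^ k‖₊ : ℝ≥0∞) ^ (1 / (k : ℝ)) < c :=
    ht.eventually_lt_const hc1
  have hev2 : ∀ᶠ k : ℕ in atTop, ‖B ^ k‖ ≤ (c : ℝ) ^ k := by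
    filter_upwards [hev, eventually_ge_atTop 1] with k hk hk1
    have hk0 : (k : ℝ) ≠ 0 := Nat.cast_ne_zero.mpr (by omega)
    have : (‖B ^ k‖₊ : ℝ≥0∞) ≤ (c : ℝ≥0∞) ^ (k : ℝ) := by
      calc (‖B ^ k‖₊ : ℝ≥0∞) = ((‖B ^ k‖₊ : ℝ≥0∞) ^ (1 / (k : ℝ))) ^ (k : ℝ) := by
            rw [← ENNReal.rpow_mul, one_div, inv_mul_cancel₀ hk0, ENNReal.rpow_one]
        _ ≤ (c : ℝ≥0∞) ^ (k : ℝ) :=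
            ENNReal.rpow_le_rpow hk.le (by positivity)
    rw [ENNReal.rpow_natCast, ← ENNReal.coe_pow, ENNReal.coe_le_coe] at this
    calc ‖B ^ k‖ = ((‖B ^ k‖₊ : ℝ≥0) : ℝ) := rfl
      _ ≤ ((c ^ k : ℝ≥0) : ℝ) := by exact_mod_cast this
      _ = (c : ℝ) ^ k := by push_cast; ring
  have hBk : ∀ k : ℕ, B ^ k = (A ^ k).map (algebraMap ℝ ℂ) := by
    intro k
    rw [hB, ← RingHom.mapMatrix_apply, ← RingHom.mapMatrix_apply, ← map_pow]
  have habs : Tendsto (fun k => |(A ^ k) i j|) atTop (𝓝 0) := by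
    apply squeeze_zero' (Eventually.of_forall fun k => abs_nonneg _) _
      (tendsto_pow_atTop_nhds_zero_of_lt_one c.coe_nonneg hc2')
    filter_upwards [hev2] with k hk
    calc |(A ^ k) i j| = ‖(B ^ k) i j‖ := by
          rw [hBk]; simp [Matrix.map_apply, Real.norm_eq_abs]
      _ ≤ ‖B ^ k‖ := by exact_mod_cast aux_entry_nnnorm_le (B ^ k) i j
      _ ≤ (c : ℝ) ^ k := hk
  exact tendsto_zero_iff_abs_tendsto_zero _ |>.mpr habs

private lemma aux_quad_transpose {n : ℕ} (A M : Matrix (Fin n) (Fin n) ℝ) (y : Fin n → ℝ) :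
    (A *ᵥ y) ⬝ᵥ (M *ᵥ (A *ᵥ y)) = y ⬝ᵥ ((Aᵀ * M * A) *ᵥ y) := by
  rw [← Matrix.mulVec_mulVec, ← Matrix.mulVec_mulVec, Matrix.dotProduct_mulVec y,
    Matrix.vecMul_transpose]

private lemma aux_rayleigh {n : ℕ} (hn : 0 < n) (P : Matrix (Fin n) (Fin n) ℝ)
    (hP : P.IsHermitian) (x : Fin n → ℝ) :
    x ⬝ᵥ (P *ᵥ x) ≤ (⨆ i, hP.eigenvalues i) * (x ⬝ᵥ x) := by
  haveI : Nonempty (Fin n) := Fin.pos_iff_nonempty.mp hn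
  set c := ⨆ i, hP.eigenvalues i with hc
  have hle : ∀ i, hP.eigenvalues i ≤ c := fun i =>
    le_ciSup (Set.Finite.bddAbove (Set.finite_range _)) i
  set U : Matrix (Fin n) (Fin n) ℝ := (hP.eigenvectorUnitary : Matrix (Fin n) (Fin n) ℝ) with hU
  have hUU : U * star U = 1 := Matrix.mem_unitaryGroup_iff.mp hP.eigenvectorUnitary.2
  have hdiag : (Matrix.diagonal (fun i => c - hP.eigenvalues i)).PosSemidef :=
    Matrix.posSemidef_diagonal_iff.mpr fun i => sub_nonneg.mpr (hle i)
  have hpsd : (c • (1 : Matrix (Fin n) (Fin n) ℝ) - P).PosSemidef := by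
    have h1 : c • (1 : Matrix (Fin n) (Fin n) ℝ) - P
        = U * Matrix.diagonal (fun i => c - hP.eigenvalues i) * Uᴴ := by
      have hspec := hP.spectral_theorem
      rw [Unitary.conjStarAlgAut_apply, ← hU] at hspec
      calc c • (1 : Matrix (Fin n) (Fin n) ℝ) - P
          = c • (U * star U) - U * Matrix.diagonal (RCLike.ofReal ∘ hP.eigenvalues) * star U := by
            rw [hUU, ← hspec]
        _ = U * (c • 1 - Matrix.diagonal (RCLike.ofReal ∘ hP.eigenvalues)) * star U := by
            rw [Matrix.mul_sub, Matrix.sub_mul]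
            congr 1
            rw [Matrix.mul_smul, Matrix.smul_mul, mul_one]
        _ = U * Matrix.diagonal (fun i => c - hP.eigenvalues i) * Uᴴ := by
            congr 1
            · congr 1
              rw [Matrix.smul_one_eq_diagonal, ← Matrix.diagonal_sub]
              simp [Function.comp_def]
    rw [h1]
    exact hdiag.mul_mul_conjTranspose_same U
  have h2 := hpsd.dotProduct_mulVec_nonneg x
  simp only [star_trivial, Matrix.sub_mulVec, Matrix.smul_mulVec, Matrix.one_mulVec,
    dotProduct_sub, dotProduct_smul, smul_eq_mul] at h2
  linarith

/-- Monotonicity of the Lyapunov solution: if `Q ⪰ I` and `P`, `P_I` solve the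
discrete Lyapunov equations with right-hand sides `-Q` and `-I` respectively,
then `P ⪰ P_I` in the Loewner order, and consequently
`λ_max(P_I) ≤ λ_max(P)`. -/
theorem stmt_9 {n : ℕ} (hn : 0 < n) (A P PI Q : Matrix (Fin n) (Fin n) ℝ)
    (hstab : ∀ μ : ℂ, (A.charpoly.map (algebraMap ℝ ℂ)).IsRoot μ → ‖μ‖ < 1)
    (hQ : (Q - 1).PosSemidef)
    (hP : P.IsHermitian) (hPI : PI.IsHermitian)
    (hlyap : Aᵀ * P * A - P = -Q)
    (hlyapI : Aᵀ * PI * A - PI = -(1 : Matrix (Fin n) (Fin n) ℝ)) :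
    (P - PI).PosSemidef ∧
      (⨆ i, hPI.eigenvalues i) ≤ (⨆ i, hP.eigenvalues i) := by
  haveI : Nonempty (Fin n) := Fin.pos_iff_nonempty.mp hn
  have key : Aᵀ * (P - PI) * A - (P - PI) = -(Q - 1) := by
    have h1 : Aᵀ * (P - PI) * A - (P - PI)
        = (Aᵀ * P * A - P) - (Aᵀ * PI * A - PI) := by
      rw [Matrix.mul_sub, Matrix.sub_mul]
      abel
    rw [h1, hlyap, hlyapI]
    abel
  have hD : (P - PI).PosSemidef := by
    refine Matrix.PosSemidef.of_dotProduct_mulVec_nonneg (hP.sub hPI) fun x => ?_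
    rw [star_trivial]
    set f : ℕ → ℝ := fun t => (A ^ t *ᵥ x) ⬝ᵥ ((P - PI) *ᵥ (A ^ t *ᵥ x)) with hf
    have hstep : ∀ t, f (t + 1) ≤ f t := by
      intro t
      set y := A ^ t *ᵥ x with hy
      have hAy : A ^ (t + 1) *ᵥ x = A *ᵥ y := by
        rw [pow_succ', ← Matrix.mulVec_mulVec]
      have hft1 : f (t + 1) = y ⬝ᵥ ((Aᵀ * (P - PI) * A) *ᵥ y) := by
        rw [hf]; simp only [hAy]; exact aux_quad_transpose A (P - PI) y
      have hsub : f t - f (t + 1) = y ⬝ᵥ ((Q - 1) *ᵥ y) := by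
        rw [hft1, hf]
        have : (P - PI) - Aᵀ * (P - PI) * A = Q - 1 := by
          have := key
          rw [← neg_neg (Q - 1), ← key]
          abel
        rw [← this, Matrix.sub_mulVec, dotProduct_sub]
      have hQy : 0 ≤ y ⬝ᵥ ((Q - 1) *ᵥ y) := by
        have := hQ.dotProduct_mulVec_nonneg y
        rwa [star_trivial] at this
      linarith
    have hanti : ∀ t, f t ≤ f 0 := by
      intro t
      induction t with
      | zero => exact le_rfl
      | succ t ih => exact (hstep t).trans ih
    have hgi : ∀ i, Tendsto (fun t => (A ^ t *ᵥ x) i) atTop (𝓝 0) := by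
      intro i
      have hrepr : ∀ t, (A ^ t *ᵥ x) i = ∑ j, (A ^ t) i j * x j := fun t => rfl
      simp only [hrepr]
      have h0 : Tendsto (fun t => ∑ j : Fin n, (A ^ t) i j * x j) atTop
          (𝓝 (∑ j : Fin n, 0 * x j)) :=
        tendsto_finset_sum _ fun j _ => (aux_pow_entry_tendsto hn A hstab i j).mul_const (x j)
      simpa using h0
    have hg : Tendsto (fun t => A ^ t *ᵥ x) atTop (𝓝 0) :=
      tendsto_pi_nhds.mpr fun i => by simpa using hgi i
    have hφ : Continuous fun v : Fin n → ℝ => v ⬝ᵥ ((P - PI) *ᵥ v) := by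
      show Continuous fun v : Fin n → ℝ => ∑ i, v i * ∑ j, (P - PI) i j * v j
      exact continuous_finset_sum _ fun i _ =>
        (continuous_apply i).mul
          (continuous_finset_sum _ fun j _ => continuous_const.mul (continuous_apply j))
    have htend : Tendsto f atTop (𝓝 0) := by
      have := (hφ.tendsto 0).comp hg
      simpa [hf, Function.comp_def] using this
    have h0le : 0 ≤ f 0 :=
      le_of_tendsto htend (Eventually.of_forall hanti)
    simpa [hf] using h0le
  refine ⟨hD, ?_⟩
  obtain ⟨j, hj⟩ : ∃ j, hPI.eigenvalues j = ⨆ i, hPI.eigenvalues i :=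
    exists_eq_ciSup_of_finite
  set v : Fin n → ℝ := (hPI.eigenvectorBasis j : Fin n → ℝ) with hv
  have hval : hPI.eigenvalues j = v ⬝ᵥ (PI *ᵥ v) := by
    simpa using hPI.eigenvalues_eq j
  have hnorm : v ⬝ᵥ v = 1 := by
    have h1 : ‖hPI.eigenvectorBasis j‖ = 1 := hPI.eigenvectorBasis.orthonormal.1 j
    have h2 : (inner ℝ (hPI.eigenvectorBasis j) (hPI.eigenvectorBasis j) : ℝ) = 1 := by
      rw [real_inner_self_eq_norm_sq, h1]; norm_num
    rw [← h2]
    rw [EuclideanSpace.inner_eq_star_dotProduct, star_trivial]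
  have hstep1 : v ⬝ᵥ (PI *ᵥ v) ≤ v ⬝ᵥ (P *ᵥ v) := by
    have := hD.dotProduct_mulVec_nonneg v
    rw [star_trivial, Matrix.sub_mulVec, dotProduct_sub] at this
    linarith
  have hstep2 : v ⬝ᵥ (P *ᵥ v) ≤ (⨆ i, hP.eigenvalues i) * (v ⬝ᵥ v) :=
    aux_rayleigh hn P hP v
  calc (⨆ i, hPI.eigenvalues i) = hPI.eigenvalues j := hj.symm
    _ = v ⬝ᵥ (PI *ᵥ v) := hval
    _ ≤ v ⬝ᵥ (P *ᵥ v) := hstep1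
    _ ≤ (⨆ i, hP.eigenvalues i) * (v ⬝ᵥ v) := hstep2
    _ = ⨆ i, hP.eigenvalues i := by rw [hnorm, mul_one]
end

section
/- Let A ∈ ℝ^{n×n}, C ∈ ℝ^{q×n}, B, D matrices, ρ(A) < 1, and Y = {y : -y_j^l ≤ y_j ≤ y_j^u, all j} with y_j^l, y_j^u > 0. Let ε ∈ (0,1), γ = max_j max{y_j^u/y_j^l, y_j^l/y_j^u}, and H_0 = C(I-A)^{-1}B + D. Suppose A^{m+1} = Σ_{i=0}^m α_i A^i with (1 + γ(1-ε)) Σ_{α_i>0} α_i - (γ + (1-ε)) Σ_{α_i<0} α_i ≤ ε. Then for any (x_0, u) with H_0 u ∈ (1-ε)Y and y(t) = C A^t(x_0 - (I-A)^{-1}Bu) + H_0 u ∈ Y for t = 0,...,m, it holds that y(t) ∈ Y for all t ≥ 0. -/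
open Matrix

private lemma scalar_key {ι : Type*} (s : Finset ι) (α : ι → ℝ) (Y : ι → ℝ)
    (w yl yu γ ε : ℝ) (hyl : 0 < yl) (hyu : 0 < yu)
    (hγ1 : yl ≤ γ * yu) (hγ2 : yu ≤ γ * yl)
    (hw1 : -(1 - ε) * yl ≤ w) (hw2 : w ≤ (1 - ε) * yu)
    (hY : ∀ i ∈ s, -yl ≤ Y i ∧ Y i ≤ yu)
    (hcond : (1 + γ * (1 - ε)) * (∑ i ∈ s, max (α i) 0)
      - (γ + (1 - ε)) * (∑ i ∈ s, min (α i) 0) ≤ ε) :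
    -yl ≤ (∑ i ∈ s, α i * (Y i - w)) + w ∧ (∑ i ∈ s, α i * (Y i - w)) + w ≤ yu := by
  set P := ∑ i ∈ s, max (α i) 0 with hP
  set N := ∑ i ∈ s, min (α i) 0 with hN
  have hPge : 0 ≤ P := Finset.sum_nonneg fun i _ => le_max_right _ _
  have hNle : N ≤ 0 := Finset.sum_nonpos fun i _ => min_le_right _ _
  have hub : (∑ i ∈ s, α i * (Y i - w)) ≤ P * (yu - w) + N * (-yl - w) := by
    calc (∑ i ∈ s, α i * (Y i - w))
        ≤ ∑ i ∈ s, (max (α i) 0 * (yu - w) + min (α i) 0 * (-yl - w)) := by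
          refine Finset.sum_le_sum fun i hi => ?_
          obtain ⟨h1, h2⟩ := hY i hi
          have hm : max (α i) 0 + min (α i) 0 = α i := by rw [max_add_min, add_zero]
          have e : α i * (Y i - w)
              = max (α i) 0 * (Y i - w) + min (α i) 0 * (Y i - w) := by
            rw [← add_mul, hm]
          rw [e]
          have t1 := mul_le_mul_of_nonneg_left (sub_le_sub_right h2 w) (le_max_right (α i) 0)
          have t2 := mul_le_mul_of_nonpos_left (sub_le_sub_right h1 w) (min_le_right (α i) 0)
          linarith
      _ = P * (yu - w) + N * (-yl - w) := by
          rw [Finset.sum_add_distrib, ← Finset.sum_mul, ← Finset.sum_mul]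
  have hlb : -P * yl + N * yu - (P + N) * w ≤ ∑ i ∈ s, α i * (Y i - w) := by
    have : ∑ i ∈ s, (max (α i) 0 * (-yl - w) + min (α i) 0 * (yu - w))
        ≤ ∑ i ∈ s, α i * (Y i - w) := by
      refine Finset.sum_le_sum fun i hi => ?_
      obtain ⟨h1, h2⟩ := hY i hi
      have e : α i * (Y i - w)
          = max (α i) 0 * (Y i - w) + min (α i) 0 * (Y i - w) := by
        rw [← add_mul, max_add_min, add_zero]
      rw [e]
      have t1 := mul_le_mul_of_nonneg_left (sub_le_sub_right h1 w) (le_max_right (α i) 0)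
      have t2 := mul_le_mul_of_nonpos_left (sub_le_sub_right h2 w) (min_le_right (α i) 0)
      linarith
    rw [Finset.sum_add_distrib, ← Finset.sum_mul, ← Finset.sum_mul] at this
    linarith [this]
  constructor
  · nlinarith [mul_le_mul_of_nonneg_left hγ2 hPge, mul_le_mul_of_nonpos_left hγ2 hNle,
      mul_le_mul_of_nonneg_left hw2 hPge, mul_le_mul_of_nonpos_left hw1 hNle,
      mul_le_mul_of_nonneg_right hcond hyl.le]
  · nlinarith [mul_le_mul_of_nonneg_left hγ1 hPge, mul_le_mul_of_nonpos_left hγ1 hNle,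
      mul_le_mul_of_nonneg_left hw1 hPge, mul_le_mul_of_nonpos_left hw2 hNle,
      mul_le_mul_of_nonneg_right hcond hyu.le]
private lemma sum_mulVec' {ι m' n' : Type*} [Fintype n'] (s : Finset ι)
    (M : ι → Matrix m' n' ℝ) (v : n' → ℝ) :
    (∑ i ∈ s, M i).mulVec v = ∑ i ∈ s, (M i).mulVec v := by
  ext j
  simp only [Matrix.mulVec, dotProduct, Matrix.sum_apply, Finset.sum_mul, Finset.sum_apply]
  rw [Finset.sum_comm]

private lemma mulVec_sum' {ι m' n' : Type*} [Fintype n'] (s : Finset ι)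
    (M : Matrix m' n' ℝ) (f : ι → n' → ℝ) :
    M.mulVec (∑ i ∈ s, f i) = ∑ i ∈ s, M.mulVec (f i) := by
  ext j
  simp only [Matrix.mulVec, dotProduct, Finset.sum_apply, Finset.mul_sum]
  rw [Finset.sum_comm]

/-- Forced-system redundancy theorem: with the steady state tightened by
`(1-ε)` and the coefficient condition
`(1+γ(1-ε)) ∑_{αᵢ>0} αᵢ - (γ+(1-ε)) ∑_{αᵢ<0} αᵢ ≤ ε`, admissibility of the
output over `t = 0, …, m` implies admissibility for all `t ≥ 0`. -/
theorem stmt_13 {n p q : ℕ} (hq : 0 < q)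
    (A : Matrix (Fin n) (Fin n) ℝ) (B : Matrix (Fin n) (Fin p) ℝ)
    (C : Matrix (Fin q) (Fin n) ℝ) (D : Matrix (Fin q) (Fin p) ℝ)
    (hstab : ∀ μ : ℂ, (A.charpoly.map (algebraMap ℝ ℂ)).IsRoot μ → ‖μ‖ < 1)
    (yl yu : Fin q → ℝ) (hyl : ∀ j, 0 < yl j) (hyu : ∀ j, 0 < yu j)
    (ε : ℝ) (hε : ε ∈ Set.Ioo (0 : ℝ) 1)
    (γ : ℝ)
    (hγ : γ = Finset.univ.sup' (Finset.univ_nonempty_iff.mpr ⟨⟨0, hq⟩⟩)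
      (fun j : Fin q => max (yu j / yl j) (yl j / yu j)))
    (H0 : Matrix (Fin q) (Fin p) ℝ)
    (hH0 : H0 = C * (1 - A)⁻¹ * B + D)
    (m : ℕ) (α : ℕ → ℝ)
    (hexp : A ^ (m + 1) = ∑ i ∈ Finset.range (m + 1), α i • A ^ i)
    (hcond : (1 + γ * (1 - ε)) * (∑ i ∈ Finset.range (m + 1), max (α i) 0)
      - (γ + (1 - ε)) * (∑ i ∈ Finset.range (m + 1), min (α i) 0) ≤ ε)
    (x0 : Fin n → ℝ) (u : Fin p → ℝ)
    (hss : ∀ j, -(1 - ε) * yl j ≤ (H0.mulVec u) j ∧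
      (H0.mulVec u) j ≤ (1 - ε) * yu j)
    (hadm : ∀ t ≤ m, ∀ j,
      -yl j ≤ (C.mulVec ((A ^ t).mulVec (x0 - (1 - A)⁻¹.mulVec (B.mulVec u)))
          + H0.mulVec u) j ∧
        (C.mulVec ((A ^ t).mulVec (x0 - (1 - A)⁻¹.mulVec (B.mulVec u)))
          + H0.mulVec u) j ≤ yu j) :
    ∀ t : ℕ, ∀ j,
      -yl j ≤ (C.mulVec ((A ^ t).mulVec (x0 - (1 - A)⁻¹.mulVec (B.mulVec u)))
          + H0.mulVec u) j ∧
        (C.mulVec ((A ^ t).mulVec (x0 - (1 - A)⁻¹.mulVec (B.mulVec u)))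
          + H0.mulVec u) j ≤ yu j := by
  obtain ⟨hε0, hε1⟩ := hε
  set v : Fin n → ℝ := x0 - (1 - A)⁻¹.mulVec (B.mulVec u) with hv
  set w : Fin q → ℝ := H0.mulVec u with hw
  have hγj : ∀ j, yl j ≤ γ * yu j ∧ yu j ≤ γ * yl j := by
    intro j
    have hle : max (yu j / yl j) (yl j / yu j) ≤ γ := by
      rw [hγ]
      exact Finset.le_sup' (fun j : Fin q => max (yu j / yl j) (yl j / yu j))
        (Finset.mem_univ j)
    constructor
    · have := le_trans (le_max_right (yu j / yl j) (yl j / yu j)) hle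
      rw [div_le_iff₀ (hyu j)] at this
      linarith
    · have := le_trans (le_max_left (yu j / yl j) (yl j / yu j)) hle
      rw [div_le_iff₀ (hyl j)] at this
      linarith
  intro t
  induction t using Nat.strong_induction_on with
  | _ t ih =>
    by_cases ht : t ≤ m
    · exact hadm t ht
    · push_neg at ht
      set k := t - (m + 1) with hk
      have htk : t = k + (m + 1) := by omega
      have hpow : A ^ t = ∑ i ∈ Finset.range (m + 1), α i • A ^ (k + i) := by
        rw [htk, pow_add, hexp, Finset.mul_sum]
        refine Finset.sum_congr rfl fun i _ => ?_
        rw [mul_smul_comm, ← pow_add]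
      have hy : ∀ j, (C.mulVec ((A ^ t).mulVec v) + w) j
          = (∑ i ∈ Finset.range (m + 1),
              α i * ((C.mulVec ((A ^ (k + i)).mulVec v) + w) j - w j)) + w j := by
        intro j
        rw [hpow, sum_mulVec']
        have : C.mulVec (∑ i ∈ Finset.range (m + 1), (α i • A ^ (k + i)).mulVec v)
            = ∑ i ∈ Finset.range (m + 1), α i • C.mulVec ((A ^ (k + i)).mulVec v) := by
          rw [mulVec_sum']
          refine Finset.sum_congr rfl fun i _ => ?_
          rw [Matrix.smul_mulVec, Matrix.mulVec_smul]
        simp only [Pi.add_apply, this, Finset.sum_apply, Pi.smul_apply, smul_eq_mul]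
        ring_nf
      intro j
      rw [hy j]
      refine scalar_key _ α (fun i => (C.mulVec ((A ^ (k + i)).mulVec v) + w) j)
        (w j) (yl j) (yu j) γ ε (hyl j) (hyu j) (hγj j).1 (hγj j).2
        (hss j).1 (hss j).2 (fun i hi => ?_) hcond
      exact ih (k + i) (by simp only [Finset.mem_range] at hi; omega) j
end

section
/- Let a ∈ ℝ with |a| < 1, ε ∈ (0,1), γ ≥ 1. If -ε/(γ + (1-ε)) ≤ a < ε/(1 + γ(1-ε)), then the coefficient condition (1+γ(1-ε))·max(a,0) - (γ+(1-ε))·min(a,0) ≤ ε holds; consequently, for a first-order forced system satisfying these bounds on a, the admissibility index t* of the tightened maximal admissible set equals 0. -/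
lemma key_15 (ε γ l u b x s : ℝ) (hε0 : 0 < ε) (hε1 : ε < 1) (hl : 0 < l) (hu : 0 < u)
    (hul : u ≤ γ * l) (hlu : l ≤ γ * u) (hb1 : b ≤ 1) (hb2 : -b * (γ + (1 - ε)) ≤ ε)
    (hs1 : -(1 - ε) * l ≤ s) (hs2 : s ≤ (1 - ε) * u) (h1 : -l ≤ x + s) (h2 : x + s ≤ u) :
    -l ≤ b * x + s ∧ b * x + s ≤ u := by
  rcases le_or_gt 0 b with hb | hb
  · constructor
    · nlinarith [mul_nonneg hb (by linarith : (0:ℝ) ≤ x + s + l),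
        mul_nonneg (by linarith : (0:ℝ) ≤ 1 - b) (by linarith : (0:ℝ) ≤ s + (1 - ε) * l),
        mul_nonneg (mul_nonneg hε0.le (by linarith : (0:ℝ) ≤ 1 - b)) hl.le]
    · nlinarith [mul_nonneg hb (by linarith : (0:ℝ) ≤ u - (x + s)),
        mul_nonneg (by linarith : (0:ℝ) ≤ 1 - b) (by linarith : (0:ℝ) ≤ (1 - ε) * u - s),
        mul_nonneg (mul_nonneg hε0.le (by linarith : (0:ℝ) ≤ 1 - b)) hu.le]
  · constructor
    · nlinarith [mul_nonneg (by linarith : (0:ℝ) ≤ -b) (by linarith : (0:ℝ) ≤ u - (x + s)),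
        mul_nonneg (by linarith : (0:ℝ) ≤ 1 - b) (by linarith : (0:ℝ) ≤ s + (1 - ε) * l),
        mul_nonneg (by linarith : (0:ℝ) ≤ -b) (by linarith : (0:ℝ) ≤ γ * l - u),
        mul_le_mul_of_nonneg_right hb2 hl.le]
    · nlinarith [mul_nonneg (by linarith : (0:ℝ) ≤ -b) (by linarith : (0:ℝ) ≤ x + s + l),
        mul_nonneg (by linarith : (0:ℝ) ≤ 1 - b) (by linarith : (0:ℝ) ≤ (1 - ε) * u - s),
        mul_nonneg (by linarith : (0:ℝ) ≤ -b) (by linarith : (0:ℝ) ≤ γ * u - l),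
        mul_le_mul_of_nonneg_right hb2 hu.le]

/-- First-order forced case: if `-ε/(γ+(1-ε)) ≤ a < ε/(1+γ(1-ε))`, then the
coefficient condition holds for the expansion `A¹ = a·A⁰`; consequently, for a
scalar forced system the admissibility index of the tightened maximal
admissible set is `0`: the time-0 constraint together with the tightened
steady-state constraint imply all constraints. -/
theorem stmt_15 (a ε γ : ℝ) (ha : |a| < 1)
    (hε : ε ∈ Set.Ioo (0 : ℝ) 1) (hγ : 1 ≤ γ)
    (hlow : -ε / (γ + (1 - ε)) ≤ a) (hhigh : a < ε / (1 + γ * (1 - ε))) :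
    ((1 + γ * (1 - ε)) * max a 0 - (γ + (1 - ε)) * min a 0 ≤ ε) ∧
      (∀ l u c z0 s : ℝ, 0 < l → 0 < u → γ = max (u / l) (l / u) →
        (-(1 - ε) * l ≤ s ∧ s ≤ (1 - ε) * u) →
        (-l ≤ c * z0 + s ∧ c * z0 + s ≤ u) →
        ∀ t : ℕ, -l ≤ c * a ^ t * z0 + s ∧ c * a ^ t * z0 + s ≤ u) := by
  obtain ⟨hε0, hε1⟩ := hε
  have hD1 : (0:ℝ) < γ + (1 - ε) := by linarith
  have hD2 : (0:ℝ) < 1 + γ * (1 - ε) := by nlinarith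
  have hlow' : -ε ≤ a * (γ + (1 - ε)) := (div_le_iff₀ hD1).mp hlow
  have hhigh' : a * (1 + γ * (1 - ε)) < ε := (lt_div_iff₀ hD2).mp hhigh
  constructor
  · rcases le_or_gt 0 a with h | h
    · rw [max_eq_left h, min_eq_right h]
      nlinarith
    · rw [max_eq_right h.le, min_eq_left h.le]
      nlinarith
  · intro l u c z0 s hl hu hγeq ⟨hs1, hs2⟩ ⟨h1, h2⟩ t
    have hul : u ≤ γ * l := by
      have : u / l ≤ γ := hγeq ▸ le_max_left _ _
      calc u = (u / l) * l := by field_simp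
        _ ≤ γ * l := by nlinarith
    have hlu : l ≤ γ * u := by
      have : l / u ≤ γ := hγeq ▸ le_max_right _ _
      calc l = (l / u) * u := by field_simp
        _ ≤ γ * u := by nlinarith
    have hb1 : a ^ t ≤ 1 := by
      calc a ^ t ≤ |a ^ t| := le_abs_self _
        _ = |a| ^ t := abs_pow a t
        _ ≤ 1 := pow_le_one₀ (abs_nonneg a) ha.le
    have hb2 : -(a ^ t) * (γ + (1 - ε)) ≤ ε := by
      rcases Nat.eq_zero_or_pos t with ht | ht
      · subst ht; simp; nlinarith
      · have h1' : -(a ^ t) ≤ |a| ^ t := by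
          rw [← abs_pow]; exact neg_le_abs _
        have h2' : |a| ^ t ≤ |a| := pow_le_of_le_one (abs_nonneg a) ha.le ht.ne'
        rcases le_or_gt 0 a with hha | hha
        · have : -(a ^ t) ≤ 0 := neg_nonpos_of_nonneg (pow_nonneg hha t)
          nlinarith
        · have : |a| = -a := abs_of_neg hha
          nlinarith
    have := key_15 ε γ l u (a ^ t) (c * z0) s hε0 hε1 hl hu hul hlu hb1 hb2 hs1 hs2
      (by linarith [h1]) (by linarith [h2])
    obtain ⟨A, B⟩ := this
    have heq : c * a ^ t * z0 = a ^ t * (c * z0) := by ring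
    rw [heq]
    exact ⟨A, B⟩
end
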